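/- arXiv:1212.1113 — 4 statements merged into one kernel-verified Lean document; each statement's English description precedes it below -/
import Mathlib

section
/- Suppose that for every continuous linear functional S ∈ E₁* satisfying S(F₁(w)) = 0 for all w ∈ ker F₂, there exists a continuous linear functional T ∈ E₂* with T(F₂(v)) = S(F₁(v)) for all v ∈ V. Then there exists a constant C > 0 such that inf_{w ∈ ker F₂} ‖F₁(v) + F₁(w)‖ ≤ C·‖F₂(v)‖ for every v ∈ V. -/
/-!
The functionals `S ∈ E₁*` vanishing on `F₁ (ker F₂)` form a closed, hence complete, subspace `M`
of `E₁*`. For `S ∈ M` the hypothesis gives `‖S (F₁ v)‖ ≤ ‖T‖ ‖F₂ v‖`, a bound that depends on `S`;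
the uniform boundedness principle on `M` turns it into `‖S (F₁ v)‖ ≤ C ‖S‖ ‖F₂ v‖`. By Hahn–Banach
on the quotient `E₁ ⧸ F₁ (ker F₂)`, the distance from `F₁ v` to `F₁ (ker F₂)`, which bounds the
infimum, is attained as `S (F₁ v)` for some `S ∈ M` of norm at most one.
-/

open Metric

theorem exists_norm_apply_le_mul_of_forall_exists_norm_apply_le {𝕂 X Y ι : Type*} [RCLike 𝕂]
    [SeminormedAddCommGroup X] [NormedSpace 𝕂 X] [CompleteSpace X]
    [SeminormedAddCommGroup Y] [NormedSpace 𝕂 Y]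
    (g : ι → X →L[𝕂] Y) (r : ι → ℝ) (hr : ∀ i, 0 ≤ r i)
    (h : ∀ x, ∃ c, ∀ i, ‖g i x‖ ≤ c * r i) :
    ∃ C, 0 < C ∧ ∀ i x, ‖g i x‖ ≤ C * ‖x‖ * r i := by
  obtain ⟨C, hC⟩ := banach_steinhaus (g := fun i : {i // 0 < r i} ↦ (r i : 𝕂)⁻¹ • g i)
    fun x ↦ by
      obtain ⟨c, hc⟩ := h x
      refine ⟨c, fun i ↦ ?_⟩
      rw [smul_apply, norm_smul, norm_inv, RCLike.norm_ofReal,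
        abs_of_pos i.2, inv_mul_le_iff₀ i.2, mul_comm]
      exact hc i
  refine ⟨max C 1, by positivity, fun i x ↦ ?_⟩
  rcases (hr i).eq_or_lt with hi | hi
  · obtain ⟨c, hc⟩ := h x
    simpa [← hi] using hc i
  · have hgi : g i x = (r i : 𝕂) • (((r i : 𝕂)⁻¹ • g i) x) := by
      rw [smul_apply, smul_inv_smul₀ (by exact_mod_cast hi.ne')]
    calc ‖g i x‖ = r i * ‖((r i : 𝕂)⁻¹ • g i) x‖ := by
          rw [hgi, norm_smul, RCLike.norm_ofReal, abs_of_pos hi]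
      _ ≤ r i * (C * ‖x‖) := by
          gcongr
          exact (ContinuousLinearMap.le_opNorm _ x).trans (by gcongr; exact hC ⟨i, hi⟩)
      _ ≤ max C 1 * ‖x‖ * r i := by
          rw [mul_comm]; gcongr; exact le_max_left _ _

theorem StrongDual.isClosed_polarSubmodule (𝕂 : Type*) [RCLike 𝕂] {E : Type*}
    [SeminormedAddCommGroup E] [NormedSpace 𝕂 E] (N : Submodule 𝕂 E) :
    IsClosed (polarSubmodule 𝕂 N : Set (StrongDual 𝕂 E)) :=
  NormedSpace.isClosed_polar 𝕂 (N : Set E)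

theorem Submodule.exists_mem_polarSubmodule_norm_le_one_apply_eq_infDist {𝕂 E : Type*} [RCLike 𝕂]
    [SeminormedAddCommGroup E] [NormedSpace 𝕂 E] (N : Submodule 𝕂 E) (x : E) :
    ∃ S ∈ StrongDual.polarSubmodule 𝕂 N, ‖S‖ ≤ 1 ∧ S x = infDist x N := by
  obtain ⟨f, hf, hfx⟩ := exists_dual_vector'' 𝕂 (N.mkQ x)
  have hmkQL : ‖N.mkQL‖ ≤ 1 :=
    ContinuousLinearMap.opNorm_le_bound _ zero_le_one fun y ↦ by
      simpa using Submodule.Quotient.norm_mk_le N y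
  refine ⟨f.comp N.mkQL, (StrongDual.mem_polarSubmodule 𝕂 N _).2 fun y hy ↦ ?_, ?_, ?_⟩
  · simp [(Submodule.Quotient.mk_eq_zero N).2 hy]
  · calc ‖f.comp N.mkQL‖ ≤ ‖f‖ * ‖N.mkQL‖ := ContinuousLinearMap.opNorm_comp_le _ _
      _ ≤ 1 := mul_le_one₀ hf (norm_nonneg _) hmkQL
  · rw [ContinuousLinearMap.comp_apply, Submodule.mkQL_apply, hfx]
    exact congrArg _ (QuotientAddGroup.norm_mk (S := N.toAddSubgroup) x)

theorem iInf_norm_add_le_infDist_map {𝕂 V E : Type*} [RCLike 𝕂] [AddCommGroup V] [Module 𝕂 V]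
    [SeminormedAddCommGroup E] [NormedSpace 𝕂 E] (F : V →ₗ[𝕂] E) (K : Submodule 𝕂 V) (v : V) :
    ⨅ w : K, ‖F v + F w‖ ≤ infDist (F v) (K.map F) := by
  have hbdd : BddBelow (Set.range fun w : K ↦ ‖F v + F w‖) := ⟨0, by rintro _ ⟨w, rfl⟩; positivity⟩
  rw [infDist_eq_iInf]
  refine le_ciInf fun ⟨y, hy⟩ ↦ ?_
  obtain ⟨w, hw, rfl⟩ := Submodule.mem_map.1 hy
  refine (ciInf_le hbdd ⟨-w, K.neg_mem hw⟩).trans_eq ?_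
  simp [dist_eq_norm, sub_eq_add_neg]

theorem exists_norm_apply_le_of_forall_exists_comp_eq {𝕂 E₁ E₂ V : Type*} [RCLike 𝕂]
    [SeminormedAddCommGroup E₁] [NormedSpace 𝕂 E₁] [SeminormedAddCommGroup E₂] [NormedSpace 𝕂 E₂]
    [AddCommGroup V] [Module 𝕂 V] (F₁ : V →ₗ[𝕂] E₁) (F₂ : V →ₗ[𝕂] E₂)
    (M : Submodule 𝕂 (StrongDual 𝕂 E₁)) [CompleteSpace M]
    (h : ∀ S ∈ M, ∃ T : StrongDual 𝕂 E₂, ∀ v, T (F₂ v) = S (F₁ v)) :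
    ∃ C, 0 < C ∧ ∀ S ∈ M, ∀ v, ‖S (F₁ v)‖ ≤ C * ‖S‖ * ‖F₂ v‖ := by
  obtain ⟨C, hC, hbound⟩ := exists_norm_apply_le_mul_of_forall_exists_norm_apply_le
    (fun v ↦ (ContinuousLinearMap.apply 𝕂 𝕂 (F₁ v)).comp (M.subtypeL : M →L[𝕂] _))
    (fun v ↦ ‖F₂ v‖) (fun _ ↦ norm_nonneg _) fun S : M ↦ by
      obtain ⟨T, hT⟩ := h S S.2
      exact ⟨‖T‖, fun v ↦ (hT v ▸ T.le_opNorm (F₂ v) :)⟩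
  exact ⟨C, hC, fun S hS v ↦ hbound v ⟨S, hS⟩⟩

theorem stmt2_general {𝕂 : Type*} [RCLike 𝕂]
    {E₁ E₂ V : Type*}
    [NormedAddCommGroup E₁] [NormedSpace 𝕂 E₁]
    [NormedAddCommGroup E₂] [NormedSpace 𝕂 E₂]
    [AddCommGroup V] [Module 𝕂 V]
    (F₁ : V →ₗ[𝕂] E₁) (F₂ : V →ₗ[𝕂] E₂)
    (hsolv : ∀ S : E₁ →L[𝕂] 𝕂, (∀ w ∈ LinearMap.ker F₂, S (F₁ w) = 0) →
      ∃ T : E₂ →L[𝕂] 𝕂, ∀ v : V, T (F₂ v) = S (F₁ v)) :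
    ∃ C : ℝ, 0 < C ∧
      ∀ v : V, (⨅ w : LinearMap.ker F₂, ‖F₁ v + F₁ (w : V)‖) ≤ C * ‖F₂ v‖ := by
  set N := (LinearMap.ker F₂).map F₁
  have := (StrongDual.isClosed_polarSubmodule 𝕂 N).completeSpace_coe
  obtain ⟨C, hC, hbound⟩ := exists_norm_apply_le_of_forall_exists_comp_eq F₁ F₂
    (StrongDual.polarSubmodule 𝕂 N) fun S hS ↦
      hsolv S fun w hw ↦ (StrongDual.mem_polarSubmodule 𝕂 N S).1 hS _ (Submodule.mem_map_of_mem hw)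
  refine ⟨C, hC, fun v ↦ ?_⟩
  obtain ⟨S, hS, hS1, hSv⟩ := N.exists_mem_polarSubmodule_norm_le_one_apply_eq_infDist (F₁ v)
  calc ⨅ w : LinearMap.ker F₂, ‖F₁ v + F₁ w‖ ≤ infDist (F₁ v) N := iInf_norm_add_le_infDist_map ..
    _ = ‖S (F₁ v)‖ := by rw [hSv, RCLike.norm_ofReal, abs_of_nonneg infDist_nonneg]
    _ ≤ C * ‖S‖ * ‖F₂ v‖ := hbound S hS v
    _ ≤ C * ‖F₂ v‖ := by grw [hS1, mul_one]

/-- Fichera-type duality lemma, necessity: if every `S ∈ E₁*` with `S ∘ F₁` vanishing on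
`ker F₂` admits `T ∈ E₂*` with `T ∘ F₂ = S ∘ F₁`, then there is a constant `C > 0` with
`inf_{w ∈ ker F₂} ‖F₁ v + F₁ w‖ ≤ C ‖F₂ v‖` for every `v`. -/
theorem stmt2 {𝕂 : Type*} [RCLike 𝕂]
    {E₁ E₂ V : Type*}
    [NormedAddCommGroup E₁] [NormedSpace 𝕂 E₁] [CompleteSpace E₁]
    [NormedAddCommGroup E₂] [NormedSpace 𝕂 E₂] [CompleteSpace E₂]
    [AddCommGroup V] [Module 𝕂 V]
    (F₁ : V →ₗ[𝕂] E₁) (F₂ : V →ₗ[𝕂] E₂)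
    (hsolv : ∀ S : E₁ →L[𝕂] 𝕂, (∀ w ∈ LinearMap.ker F₂, S (F₁ w) = 0) →
      ∃ T : E₂ →L[𝕂] 𝕂, ∀ v : V, T (F₂ v) = S (F₁ v)) :
    ∃ C : ℝ, 0 < C ∧
      ∀ v : V, (⨅ w : LinearMap.ker F₂, ‖F₁ v + F₁ (w : V)‖) ≤ C * ‖F₂ v‖ :=
  stmt2_general F₁ F₂ hsolv
end

section
/- Let E ⊆ U ⊆ X with U open and H^s(E) < ∞. Then for every ε > 0 there exist a countable family of points p_k ∈ X and radii r_k ≥ 0 such that E is contained in the union of the closed balls B̄(p_k, r_k), the doubled closed balls B̄(p_k, 2·r_k) are all contained in U, and ∑_k r_k^s ≤ H^s(E) + ε. -/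
/-!
Slice `U` into countably many disjoint measurable layers, the `n`-th consisting of points at
distance more than `(n + 1)⁻¹` from `Uᶜ`. Cover the part of `E` in the `n`-th layer by a
Hausdorff cover of mesh at most `(2 (n + 1))⁻¹` and cost at most `μH[s] (E ∩ Aₙ) + ηₙ`, and
replace each cover set by the closed ball about one of its points with radius its diameter;
the doubled balls then stay in `U`. Additivity of `μH[s]` on measurable pieces and
`∑ ηₙ ≤ ε` give the bound.
-/

open MeasureTheory Set Metric Function

theorem MeasureTheory.tsum_measure_inter_le {α ι : Type*} [MeasurableSpace α] [Countable ι]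
    (μ : Measure α) (E : Set α) {A : ι → Set α} (hA : ∀ i, MeasurableSet (A i))
    (hd : Pairwise (Disjoint on A)) : ∑' i, μ (E ∩ A i) ≤ μ E :=
  calc ∑' i, μ (E ∩ A i) = ∑' i, μ.restrict (A i) E := by
        simp only [Measure.restrict_apply' (hA _)]
    _ = μ.restrict (⋃ i, A i) E := by
      rw [Measure.restrict_iUnion hd hA, Measure.sum_apply_of_countable]
    _ ≤ μ E := Measure.restrict_apply_le _ _

theorem IsOpen.exists_measurable_partition_closedBall_subset {X : Type*} [MetricSpace X]
    [MeasurableSpace X] [OpensMeasurableSpace X] {U : Set X} (hU : IsOpen U) :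
    ∃ A : ℕ → Set X, (∀ n, MeasurableSet (A n)) ∧ Pairwise (Disjoint on A) ∧
      U ⊆ ⋃ n, A n ∧ ∀ n, ∀ x ∈ A n, closedBall x ((n + 1 : ℝ)⁻¹) ⊆ U := by
  set B : ℕ → Set X := fun n => (cthickening ((n + 1 : ℝ)⁻¹) Uᶜ)ᶜ
  refine ⟨disjointed B,
    MeasurableSet.disjointed fun n => isClosed_cthickening.isOpen_compl.measurableSet,
    disjoint_disjointed B, ?_, ?_⟩
  · rw [iUnion_disjointed]
    intro x hx
    obtain ⟨ε, hε, hball⟩ := Metric.isOpen_iff.1 hU x hx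
    obtain ⟨n, hn⟩ := exists_nat_one_div_lt hε
    refine mem_iUnion.2 ⟨n, fun hxB => ?_⟩
    obtain ⟨z, hzU, hz⟩ := mem_thickening_iff.1
      (cthickening_subset_thickening' hε (by simpa using hn) _ hxB)
    exact hzU (hball (mem_ball'.2 hz))
  · intro n x hx y hy
    by_contra hyU
    exact disjointed_subset B n hx
      (mem_cthickening_of_dist_le x y _ _ hyU (mem_closedBall'.1 hy))

theorem MeasureTheory.Measure.exists_cover_tsum_ediam_rpow_le {X : Type*} [EMetricSpace X]
    [MeasurableSpace X] [BorelSpace X] (d : ℝ) {S : Set X} (hS : μH[d] S ≠ ⊤)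
    {r η : ENNReal} (hr : 0 < r) (hη : η ≠ 0) :
    ∃ t : ℕ → Set X, S ⊆ ⋃ n, t n ∧ (∀ n, ediam (t n) ≤ r) ∧
      ∑' n, ⨆ _ : (t n).Nonempty, ediam (t n) ^ d ≤ μH[d] S + η := by
  have hle : ⨅ (t : ℕ → Set X) (_ : S ⊆ ⋃ n, t n) (_ : ∀ n, ediam (t n) ≤ r),
      ∑' n, ⨆ _ : (t n).Nonempty, ediam (t n) ^ d ≤ μH[d] S := by
    rw [hausdorffMeasure_apply]
    exact le_iSup₂_of_le r hr le_rfl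
  obtain ⟨t, hcover, hdiam, hsum⟩ := by
    simpa only [iInf_lt_iff] using hle.trans_lt (ENNReal.lt_add_right hS hη)
  exact ⟨t, hcover, hdiam, hsum.le⟩

theorem MeasureTheory.Measure.exists_closedBall_cover_tsum_rpow_le {X : Type*} [MetricSpace X]
    [MeasurableSpace X] [BorelSpace X] {s : ℝ} (hs : 0 ≤ s) {S : Set X} (hS : μH[s] S ≠ ⊤)
    {δ : ℝ} (hδ : 0 < δ) {η : ENNReal} (hη : η ≠ 0) :
    ∃ c : Set (X × ℝ), c.Countable ∧ (∀ q ∈ c, q.1 ∈ S ∧ 0 ≤ q.2 ∧ q.2 ≤ δ) ∧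
      S ⊆ ⋃ q ∈ c, closedBall q.1 q.2 ∧
      ∑' q : c, ENNReal.ofReal ((q : X × ℝ).2 ^ s) ≤ μH[s] S + η := by
  obtain ⟨t, hcover, hdiam, hsum⟩ :=
    exists_cover_tsum_ediam_rpow_le s hS (ENNReal.ofReal_pos.2 hδ) hη
  set I := {n | (t n ∩ S).Nonempty}
  -- A nonempty piece `t n ∩ S` lies in the closed ball of radius its diameter about any of
  -- its points.
  set F : I → X × ℝ := fun n => (n.2.some, (ediam (t n ∩ S)).toReal)
  have hdiam_le : ∀ n, ediam (t n ∩ S) ≤ ENNReal.ofReal δ :=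
    fun n => (ediam_mono inter_subset_left).trans (hdiam n)
  have hdiam_ne_top : ∀ n, ediam (t n ∩ S) ≠ ⊤ :=
    fun n => ne_top_of_le_ne_top ENNReal.ofReal_ne_top (hdiam_le n)
  refine ⟨range F, countable_range F, ?_, ?_, ?_⟩
  · rintro _ ⟨n, rfl⟩
    exact ⟨n.2.some_mem.2, ENNReal.toReal_nonneg,
      ENNReal.toReal_le_of_le_ofReal hδ.le (hdiam_le n)⟩
  · intro x hx
    obtain ⟨n, hn⟩ := mem_iUnion.1 (hcover hx)
    have hn' : n ∈ I := ⟨x, hn, hx⟩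
    refine mem_biUnion (mem_range_self ⟨n, hn'⟩) ?_
    rw [mem_closedBall, dist_edist]
    exact ENNReal.toReal_mono (hdiam_ne_top n) (edist_le_ediam_of_mem ⟨hn, hx⟩ hn'.some_mem)
  · have hterm : ∀ n : I, ENNReal.ofReal ((F n).2 ^ s) ≤
        ⨆ _ : (t n).Nonempty, ediam (t n) ^ s := fun n => by
      rw [iSup_pos (n.2.mono inter_subset_left), ENNReal.toReal_rpow]
      exact ENNReal.ofReal_toReal_le.trans
        (ENNReal.rpow_le_rpow (ediam_mono inter_subset_left) hs)
    calc ∑' q : range F, ENNReal.ofReal ((q : X × ℝ).2 ^ s)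
        ≤ ∑' n : I, ENNReal.ofReal ((F n).2 ^ s) :=
          ENNReal.tsum_le_tsum_comp_of_surjective rangeFactorization_surjective
            (fun q : range F => ENNReal.ofReal ((q : X × ℝ).2 ^ s))
      _ ≤ ∑' n : I, ⨆ _ : (t n).Nonempty, ediam (t n) ^ s := ENNReal.tsum_le_tsum hterm
      _ ≤ ∑' n, ⨆ _ : (t n).Nonempty, ediam (t n) ^ s :=
          ENNReal.tsum_comp_le_tsum_of_injective Subtype.val_injective
            (fun n => ⨆ _ : (t n).Nonempty, ediam (t n) ^ s)
      _ ≤ μH[s] S + η := hsum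

/-- If `E ⊆ U` with `U` open and `E` has finite `s`-dimensional Hausdorff measure, then
for every `ε > 0` there is a countable family of closed balls covering `E`, whose doubled
closed balls lie in `U`, and whose radii satisfy `∑ rₖ^s ≤ H^s(E) + ε`. -/
theorem stmt6 {X : Type*} [MetricSpace X] [MeasurableSpace X] [BorelSpace X]
    (s : ℝ) (hs : 0 < s) (E U : Set X) (hEU : E ⊆ U) (hU : IsOpen U)
    (hE : μH[s] E < ⊤) :
    ∀ ε : ℝ, 0 < ε →
      ∃ c : Set (X × ℝ), c.Countable ∧
        (∀ q ∈ c, 0 ≤ q.2) ∧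
        (E ⊆ ⋃ q ∈ c, Metric.closedBall q.1 q.2) ∧
        (∀ q ∈ c, Metric.closedBall q.1 (2 * q.2) ⊆ U) ∧
        ∑' q : c, ENNReal.ofReal ((q : X × ℝ).2 ^ s) ≤ μH[s] E + ENNReal.ofReal ε := by
  intro ε hε
  obtain ⟨A, hAm, hAd, hUA, hAU⟩ := hU.exists_measurable_partition_closedBall_subset
  obtain ⟨η, hη, hηsum⟩ :=
    ENNReal.exists_pos_sum_of_countable' (ENNReal.ofReal_pos.2 hε).ne' ℕ
  choose c hc hcmem hcover hcsum using fun n =>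
    Measure.exists_closedBall_cover_tsum_rpow_le (S := E ∩ A n) (δ := (2 * (n + 1 : ℝ))⁻¹) hs.le
      (ne_top_of_le_ne_top hE.ne (measure_mono inter_subset_left)) (by positivity) (hη n).ne'
  refine ⟨⋃ n, c n, countable_iUnion hc, ?_, ?_, ?_, ?_⟩
  · simp only [mem_iUnion]
    rintro q ⟨n, hq⟩
    exact (hcmem n q hq).2.1
  · rw [biUnion_iUnion]
    intro x hx
    obtain ⟨n, hn⟩ := mem_iUnion.1 (hUA (hEU hx))
    exact mem_iUnion.2 ⟨n, hcover n ⟨hx, hn⟩⟩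
  · simp only [mem_iUnion]
    rintro q ⟨n, hq⟩
    obtain ⟨⟨-, hqA⟩, -, hq_le⟩ := hcmem n q hq
    refine (closedBall_subset_closedBall ?_).trans (hAU n q.1 hqA)
    calc 2 * q.2 ≤ 2 * (2 * (n + 1 : ℝ))⁻¹ := by gcongr
      _ = (n + 1 : ℝ)⁻¹ := by field_simp
  · calc ∑' q : ⋃ n, c n, ENNReal.ofReal ((q : X × ℝ).2 ^ s)
        ≤ ∑' n, ∑' q : c n, ENNReal.ofReal ((q : X × ℝ).2 ^ s) :=
          ENNReal.tsum_iUnion_le_tsum (fun q : X × ℝ => ENNReal.ofReal (q.2 ^ s)) c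
      _ ≤ ∑' n, (μH[s] (E ∩ A n) + η n) := ENNReal.tsum_le_tsum hcsum
      _ = ∑' n, μH[s] (E ∩ A n) + ∑' n, η n := ENNReal.tsum_add
      _ ≤ μH[s] E + ENNReal.ofReal ε := add_le_add (tsum_measure_inter_le _ E hAm hAd) hηsum.le
end

section
/- Let Φ : H → ℂ be holomorphic on all of H and suppose Φ(g(z,w)) = 0 for all z, w ∈ ℂ with |z| < 1 and |w| < 1 (i.e., Φ vanishes on the image of the bidisc under g). Then the Fréchet derivative of Φ at the origin 0 ∈ H is the zero functional. In particular, no hypersurface {Φ = 0} with Φ holomorphic and dΦ(0) ≠ 0 can contain the image of g near 0. -/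
open scoped ENNReal NNReal Topology

/-!
The derivative `dΦ(0)` kills every vector `(wⁿ)ₙ`, `‖w‖ < 1`, because `Φ` vanishes on the line
through it near the origin. With `cₙ = dΦ(0)(eₙ)` this says `∑ cₙ wⁿ = 0` on the unit disc, so every
`cₙ` vanishes by uniqueness of power series, and `dΦ(0) = 0` since the `eₙ` span a dense subspace.
-/

theorem memℓp_geometric {𝕜 : Type*} [NormedDivisionRing 𝕜] {p : ℝ≥0∞} (hp : p ≠ 0) {w : 𝕜}
    (hw : ‖w‖ < 1) : Memℓp (fun n : ℕ => w ^ n) p := by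
  rcases eq_or_ne p ∞ with rfl | hp_top
  · refine memℓp_infty ⟨1, ?_⟩
    rintro _ ⟨n, rfl⟩
    simpa [norm_pow] using pow_le_one₀ (norm_nonneg w) hw.le
  · have hp_pos : 0 < p.toReal := ENNReal.toReal_pos hp hp_top
    refine memℓp_gen ?_
    have hq : ‖w‖ ^ p.toReal < 1 := Real.rpow_lt_one (norm_nonneg w) hw hp_pos
    refine (summable_geometric_of_lt_one (by positivity) hq).congr fun n => ?_
    rw [norm_pow, ← Real.rpow_natCast, ← Real.rpow_natCast, ← Real.rpow_mul (norm_nonneg w),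
      ← Real.rpow_mul (norm_nonneg w), mul_comm]

theorem fderiv_apply_eq_zero_of_eventually_const_on_line {𝕜 E F : Type*}
    [NontriviallyNormedField 𝕜] [NormedAddCommGroup E] [NormedSpace 𝕜 E]
    [NormedAddCommGroup F] [NormedSpace 𝕜 F] {Φ : E → F} {x v : E}
    (hΦ : DifferentiableAt 𝕜 Φ x) (h : (fun t : 𝕜 => Φ (x + t • v)) =ᶠ[𝓝 0] fun _ => Φ x) :
    fderiv 𝕜 Φ x v = 0 := by
  rw [← hΦ.lineDeriv_eq_fderiv, lineDeriv, h.deriv_eq, deriv_const]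

theorem lp.hasSum_apply_single_mul {𝕜 ι : Type*} [NormedField 𝕜] [DecidableEq ι] {p : ℝ≥0∞}
    [Fact (1 ≤ p)] (hp : p ≠ ∞) (f : lp (fun _ : ι => 𝕜) p →L[𝕜] 𝕜) (x : lp (fun _ : ι => 𝕜) p) :
    HasSum (fun i => f (lp.single p i 1) * x i) (f x) := by
  convert (lp.hasSum_single hp x).mapL f using 2 with i
  rw [mul_comm, ← smul_eq_mul, ← map_smul, ← lp.single_smul, smul_eq_mul, mul_one]

theorem eq_zero_of_hasSum_mul_pow_eq_zero {𝕜 : Type*} [RCLike 𝕜] {c : ℕ → 𝕜} {r : ℝ}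
    (hr : 0 < r) (h : ∀ w : 𝕜, ‖w‖ < r → HasSum (fun n => c n * w ^ n) 0) : c = 0 := by
  set ρ : ℝ≥0 := ⟨r / 2, by positivity⟩
  have hρ : (ρ : ℝ) < r := by show r / 2 < r; linarith
  have hρ_pos : 0 < ρ := by show (0 : ℝ) < r / 2; positivity
  have hρ_le : (ρ : ℝ≥0∞) ≤ (FormalMultilinearSeries.ofScalars 𝕜 c).radius := by
    refine FormalMultilinearSeries.le_radius_of_tendsto _ (l := 0) ?_
    have := (h ((ρ : ℝ) : 𝕜) (by simpa using hρ)).summable.tendsto_atTop_zero.norm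
    simpa [FormalMultilinearSeries.ofScalars_norm] using this
  have hps : HasFPowerSeriesOnBall (fun _ : 𝕜 => (0 : 𝕜)) (.ofScalars 𝕜 c) 0 ρ :=
    { r_le := hρ_le
      r_pos := by exact_mod_cast hρ_pos
      hasSum := fun {y} hy => by
        have hy' : ‖y‖ < r := by
          rw [Metric.eball_coe, Metric.mem_ball, dist_zero_right] at hy
          exact hy.trans hρ
        simpa only [FormalMultilinearSeries.ofScalars_apply_eq, smul_eq_mul] using h y hy' }
  exact (FormalMultilinearSeries.ofScalars_series_eq_zero 𝕜).mp hps.hasFPowerSeriesAt.eq_zero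

/-- If `Φ : ℓ²(ℕ, ℂ) → ℂ` is holomorphic on all of `H = ℓ²(ℕ, ℂ)` and vanishes on every
point of the form `(z·wⁿ)ₙ` with `|z| < 1`, `|w| < 1`, then the Fréchet derivative of
`Φ` at the origin is zero. -/
theorem stmt9 (Φ : lp (fun _ : ℕ => ℂ) 2 → ℂ)
    (hΦ : AnalyticOnNhd ℂ Φ Set.univ)
    (hvan : ∀ x : lp (fun _ : ℕ => ℂ) 2,
      (∃ z w : ℂ, ‖z‖ < 1 ∧ ‖w‖ < 1 ∧ ∀ n : ℕ, (x : ∀ _ : ℕ, ℂ) n = z * w ^ n) →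
      Φ x = 0) :
    fderiv ℂ Φ 0 = 0 := by
  set f := fderiv ℂ Φ 0
  let geom (w : ℂ) (hw : ‖w‖ < 1) : lp (fun _ : ℕ => ℂ) 2 :=
    ⟨fun n => w ^ n, memℓp_geometric two_ne_zero hw⟩
  have hf_geom (w : ℂ) (hw : ‖w‖ < 1) : f (geom w hw) = 0 := by
    refine fderiv_apply_eq_zero_of_eventually_const_on_line (hΦ 0 trivial).differentiableAt ?_
    filter_upwards [Metric.ball_mem_nhds (0 : ℂ) one_pos] with z hz
    rw [hvan 0 ⟨0, 0, by simp, by simp, fun n => by simp⟩]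
    exact hvan _ ⟨z, w, by simpa using hz, hw, fun n => by simp [geom]⟩
  have hcoeff : (fun n => f (lp.single 2 n 1)) = 0 :=
    eq_zero_of_hasSum_mul_pow_eq_zero one_pos fun w hw =>
      hf_geom w hw ▸ lp.hasSum_apply_single_mul ENNReal.ofNat_ne_top f (geom w hw)
  exact lp.ext_continuousLinearMap ENNReal.ofNat_ne_top fun n =>
    ContinuousLinearMap.ext_ring (by simpa using congrFun hcoeff n)
end

section
/- The map f : 𝔻 → c₀ given by f(z) = (zⁿ)_{n∈ℕ} is holomorphic on 𝔻, injective, takes values in the closed unit ball of c₀ (‖f(z)‖ ≤ 1 for all z ∈ 𝔻), and is proper: for every compact subset K ⊆ c₀, the preimage f⁻¹(K) is a compact subset of the open disc 𝔻. -/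
/-!
Writing `f z = ∑ zⁿ • eₙ` in `c₀`, with `eₙ` the unit sequences, exhibits `f` as the sum of a
power series whose coefficients have norm `1`, so `f` is analytic on the disc.
For properness: the elements of a compact `K ⊆ c₀` tend to `0` uniformly (compare them with a
finite `ε`-net), so some coordinate `N` satisfies `|φ N| < 1/2` on `K`. Hence `f⁻¹(K)` lies in
`{z | |z| ≤ 1, |z|ᴺ ≤ 1/2}`, a compact subset of the open disc on which `f` is continuous.
-/

open ZeroAtInfty Filter Metric Set Topology

namespace ZeroAtInftyContinuousMap

variable {α E : Type*} [TopologicalSpace α]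

section Sequences

variable [TopologicalSpace E] [Zero E]

def ofTendsto (u : ℕ → E) (hu : Tendsto u atTop (𝓝 0)) : C₀(ℕ, E) where
  toFun := u
  continuous_toFun := continuous_of_discreteTopology
  zero_at_infty' := cocompact_eq_atTop (α := ℕ) ▸ hu

@[simp]
lemma ofTendsto_apply (u : ℕ → E) (hu : Tendsto u atTop (𝓝 0)) (n : ℕ) :
    ofTendsto u hu n = u n :=
  rfl

def single (n : ℕ) (x : E) : C₀(ℕ, E) :=
  ofTendsto (fun m => if m = n then x else 0) <| tendsto_nhds_of_eventually_eq <|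
    (eventually_gt_atTop n).mono fun _ hm => if_neg hm.ne'

lemma single_apply (n : ℕ) (x : E) (m : ℕ) : single n x m = if m = n then x else 0 :=
  rfl

end Sequences

variable [NormedAddCommGroup E]

lemma norm_apply_le (φ : C₀(α, E)) (x : α) : ‖φ x‖ ≤ ‖φ‖ :=
  norm_toBCF_eq_norm (f := φ) ▸ φ.toBCF.norm_coe_le_norm x

lemma norm_le {φ : C₀(α, E)} {C : ℝ} (hC : 0 ≤ C) :
    ‖φ‖ ≤ C ↔ ∀ x, ‖φ x‖ ≤ C :=
  norm_toBCF_eq_norm (f := φ) ▸ BoundedContinuousFunction.norm_le hC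

lemma norm_single_le (n : ℕ) (x : E) : ‖single n x‖ ≤ ‖x‖ := by
  refine (norm_le (norm_nonneg x)).2 fun m => ?_
  rcases eq_or_ne m n with rfl | hmn
  · simp [single_apply]
  · simp [single_apply, hmn]

lemma sum_apply {ι : Type*} (s : Finset ι) (φ : ι → C₀(α, E)) (x : α) :
    (∑ i ∈ s, φ i) x = ∑ i ∈ s, φ i x :=
  map_sum (⟨⟨fun ψ : C₀(α, E) => ψ x, rfl⟩, fun _ _ => rfl⟩ : C₀(α, E) →+ E) φ s

lemma hasSum_single_apply (φ : C₀(ℕ, E)) : HasSum (fun n => single n (φ n)) φ := by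
  refine tendsto_iff_tendstoUniformly.2 <| Metric.tendstoUniformly_iff.2 fun ε hε => ?_
  have hφ : Tendsto φ atTop (𝓝 0) := cocompact_eq_atTop (α := ℕ) ▸ zero_at_infty φ
  obtain ⟨N, hN⟩ := eventually_atTop.1 <|
    (tendsto_zero_iff_norm_tendsto_zero.1 hφ).eventually (gt_mem_nhds hε)
  filter_upwards [eventually_ge_atTop (Finset.range N)] with s hs m
  rw [sum_apply]
  simp only [single_apply, Finset.sum_ite_eq, dist_eq_norm]
  split_ifs with hm
  · simpa using hε
  · simpa using hN m (not_lt.1 fun h => hm (hs (Finset.mem_range.2 h)))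

lemma eventually_forall_norm_lt_of_isCompact {K : Set C₀(α, E)}
    (hK : IsCompact K) {ε : ℝ} (hε : 0 < ε) : ∀ᶠ x in cocompact α, ∀ φ ∈ K, ‖φ x‖ < ε := by
  obtain ⟨t, -, ht, hKt⟩ := hK.finite_cover_balls (half_pos hε)
  have hnet : ∀ᶠ x in cocompact α, ∀ ψ ∈ t, ‖ψ x‖ < ε / 2 := ht.eventually_all.2 fun ψ _ =>
    (tendsto_zero_iff_norm_tendsto_zero.1 (zero_at_infty ψ)).eventually (gt_mem_nhds (half_pos hε))
  filter_upwards [hnet] with x hx φ hφ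
  obtain ⟨ψ, hψ, hφψ⟩ := mem_iUnion₂.1 (hKt hφ)
  calc ‖φ x‖ ≤ ‖(φ - ψ) x‖ + ‖ψ x‖ := by rw [sub_apply]; exact norm_le_norm_sub_add _ _
    _ ≤ ‖φ - ψ‖ + ‖ψ x‖ := by gcongr; exact norm_apply_le _ _
    _ < ε / 2 + ε / 2 := by gcongr; exacts [mem_ball_iff_norm.1 hφψ, hx ψ hψ]
    _ = ε := add_halves ε

end ZeroAtInftyContinuousMap

open ZeroAtInftyContinuousMap

variable {𝕜 : Type*} [NontriviallyNormedField 𝕜]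

/-- `z ↦ (zⁿ)ₙ` on the open unit ball, extended by `0` outside it. -/
noncomputable def powersC₀ (z : 𝕜) : C₀(ℕ, 𝕜) :=
  if hz : ‖z‖ < 1 then ofTendsto (z ^ ·) (tendsto_pow_atTop_nhds_zero_of_norm_lt_one hz) else 0

lemma powersC₀_apply {z : 𝕜} (hz : ‖z‖ < 1) (n : ℕ) : powersC₀ z n = z ^ n := by
  rw [powersC₀, dif_pos hz, ofTendsto_apply]

lemma norm_powersC₀_le_one (z : 𝕜) : ‖powersC₀ z‖ ≤ 1 := by
  by_cases hz : ‖z‖ < 1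
  · refine (norm_le zero_le_one).2 fun n => ?_
    rw [powersC₀_apply hz, norm_pow]
    exact pow_le_one₀ (norm_nonneg z) hz.le
  · simp [powersC₀, hz]

lemma injOn_powersC₀ : InjOn (powersC₀ (𝕜 := 𝕜)) (ball 0 1) := fun z hz w hw h => by
  rw [mem_ball_zero_iff] at hz hw
  simpa [powersC₀_apply hz, powersC₀_apply hw] using congr($h 1)

variable (𝕜) in
noncomputable def powersC₀Series : FormalMultilinearSeries 𝕜 𝕜 C₀(ℕ, 𝕜) :=
  fun n => ContinuousMultilinearMap.mkPiRing 𝕜 (Fin n) (single n 1)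

lemma one_le_radius_powersC₀Series : 1 ≤ (powersC₀Series 𝕜).radius := by
  refine ENNReal.coe_one ▸ (powersC₀Series 𝕜).le_radius_of_bound 1 fun n => ?_
  rw [NNReal.coe_one, one_pow, mul_one, powersC₀Series, ContinuousMultilinearMap.norm_mkPiRing]
  simpa using norm_single_le n (1 : 𝕜)

lemma hasFPowerSeriesOnBall_powersC₀ : HasFPowerSeriesOnBall powersC₀ (powersC₀Series 𝕜) 0 1 where
  r_le := one_le_radius_powersC₀Series
  r_pos := one_pos
  hasSum {y} hy := by
    rw [← ENNReal.coe_one, eball_coe, NNReal.coe_one, mem_ball_zero_iff] at hy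
    have hterm : (fun n => powersC₀Series 𝕜 n fun _ => y) = fun n => single n (powersC₀ y n) := by
      ext n m
      simp [powersC₀Series, powersC₀_apply hy, single_apply]
    rw [zero_add, hterm]
    exact hasSum_single_apply (powersC₀ y)

lemma analyticOnNhd_powersC₀ [CompleteSpace 𝕜] : AnalyticOnNhd 𝕜 powersC₀ (ball (0 : 𝕜) 1) := by
  simpa [← ENNReal.coe_one, eball_coe] using hasFPowerSeriesOnBall_powersC₀.analyticOnNhd

lemma isCompact_ball_inter_preimage_powersC₀ [ProperSpace 𝕜] {K : Set C₀(ℕ, 𝕜)}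
    (hK : IsCompact K) : IsCompact (ball (0 : 𝕜) 1 ∩ powersC₀ ⁻¹' K) := by
  have hsmall := eventually_forall_norm_lt_of_isCompact hK one_half_pos
  rw [cocompact_eq_atTop] at hsmall
  obtain ⟨N, hN⟩ := hsmall.exists
  set S : Set 𝕜 := closedBall 0 1 ∩ {z | ‖z‖ ^ N ≤ 1 / 2}
  have hS_ball : S ⊆ ball 0 1 := fun z ⟨hz, hzN⟩ => by
    rw [mem_closedBall_zero_iff] at hz
    refine mem_ball_zero_iff.2 (hz.lt_of_ne fun h => ?_)
    norm_num [h] at hzN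
  have hS_closed : IsClosed S :=
    isClosed_closedBall.inter (isClosed_le (by fun_prop) continuous_const)
  have hpre : ball 0 1 ∩ powersC₀ ⁻¹' K = S ∩ powersC₀ ⁻¹' K := by
    refine Subset.antisymm (fun z ⟨hz, hzK⟩ => ⟨⟨ball_subset_closedBall hz, ?_⟩, hzK⟩)
      (inter_subset_inter_left _ hS_ball)
    simpa [powersC₀_apply (mem_ball_zero_iff.1 hz), norm_pow] using (hN _ hzK).le
  rw [hpre]
  exact (isCompact_closedBall 0 1).of_isClosed_subset
    ((analyticOnNhd_powersC₀.continuousOn.mono hS_ball).preimage_isClosed_of_isClosed hS_closed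
      hK.isClosed) (inter_subset_left.trans inter_subset_left)

/-- The map `f : 𝔻 → c₀`, `f(z) = (zⁿ)ₙ`, is holomorphic on the open unit disc,
injective there, takes values in the closed unit ball of `c₀ = C₀(ℕ, ℂ)`, and is proper:
the preimage of any compact subset of `c₀` is a compact subset of `𝔻`. -/
theorem stmt12 :
    ∃ f : ℂ → C₀(ℕ, ℂ),
      (∀ z : ℂ, ‖z‖ < 1 → ∀ n : ℕ, f z n = z ^ n) ∧
      AnalyticOnNhd ℂ f (Metric.ball 0 1) ∧
      Set.InjOn f (Metric.ball 0 1) ∧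
      (∀ z ∈ Metric.ball (0 : ℂ) 1, ‖f z‖ ≤ 1) ∧
      (∀ K : Set C₀(ℕ, ℂ), IsCompact K →
        IsCompact (Metric.ball (0 : ℂ) 1 ∩ f ⁻¹' K)) :=
  ⟨powersC₀, fun _ hz => powersC₀_apply hz, analyticOnNhd_powersC₀, injOn_powersC₀,
    fun z _ => norm_powersC₀_le_one z, fun _ => isCompact_ball_inter_preimage_powersC₀⟩
end
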